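/- arXiv:2301.11102 — 5 statements merged into one kernel-verified Lean document; each statement's English description precedes it below -/
import Mathlib

section
/- For every monotone (non-decreasing or non-increasing) sequence (τ_n)_{n∈ℕ} of Bermudan stopping strategies in Θ, the pointwise limit lim_{n→∞} τ_n is again a Bermudan stopping strategy in Θ. -/
open MeasureTheory Filter Set
open scoped ENNReal

variable {Ω : Type*}

/-- `A` belongs to the σ-algebra `F_τ` associated with the (stopping) time `τ`. -/
def MeasAtTime {m0 : MeasurableSpace Ω} (F : Filtration ℝ m0) (τ : Ω → ℝ) (A : Set Ω) : Prop :=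
  ∀ t : ℝ, MeasurableSet[F t] (A ∩ {ω | τ ω ≤ t})

/-- `f` is `F_τ`-measurable. -/
def MeasurableAtTime {m0 : MeasurableSpace Ω} (F : Filtration ℝ m0) (τ : Ω → ℝ)
    (f : Ω → ℝ) : Prop :=
  ∀ B : Set ℝ, MeasurableSet B → MeasAtTime F τ (f ⁻¹' B)

/-- Bermudan stopping strategies: stopping times which, a.s., take the value `T`
or one of the values `θ k`. -/
def InBermudan {m0 : MeasurableSpace Ω} (F : Filtration ℝ m0) (μ : Measure Ω)
    (T : ℝ) (θ : ℕ → Ω → ℝ) (τ : Ω → ℝ) : Prop :=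
  IsStoppingTime F (fun ω => (τ ω : WithTop ℝ)) ∧ ∀ᵐ ω ∂μ, τ ω = T ∨ ∃ k, τ ω = θ k ω

/-- Admissible family of random variables indexed by Bermudan stopping strategies. -/
def AdmissibleFam {m0 : MeasurableSpace Ω} (F : Filtration ℝ m0) (μ : Measure Ω)
    (T : ℝ) (θ : ℕ → Ω → ℝ) (φ : (Ω → ℝ) → Ω → ℝ) : Prop :=
  (∀ τ, InBermudan F μ T θ τ → MeasurableAtTime F τ (φ τ)) ∧
  ∀ τ τ', InBermudan F μ T θ τ → InBermudan F μ T θ τ' →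
    ∀ᵐ ω ∂μ, τ ω = τ' ω → φ τ ω = φ τ' ω

/-- p-integrability of a family. -/
def PIntFam {m0 : MeasurableSpace Ω} (F : Filtration ℝ m0) (μ : Measure Ω)
    (T : ℝ) (θ : ℕ → Ω → ℝ) (p : ℝ≥0∞) (φ : (Ω → ℝ) → Ω → ℝ) : Prop :=
  ∀ τ, InBermudan F μ T θ τ → MemLp (φ τ) p μ

/-- `v` is an essential supremum of the set `s` of random variables. -/
def IsEssSupFam {m0 : MeasurableSpace Ω} (μ : Measure Ω) (s : Set (Ω → ℝ)) (v : Ω → ℝ) : Prop :=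
  (∀ f ∈ s, f ≤ᵐ[μ] v) ∧ ∀ w : Ω → ℝ, (∀ f ∈ s, f ≤ᵐ[μ] w) → v ≤ᵐ[μ] w

/-- `V` is the value family: `V ν = ess sup_{τ ∈ Θ_ν} ρ_{ν,τ}[ξ(τ)]`,
with `V ν` chosen `F_ν`-measurable. -/
def IsValueFam {m0 : MeasurableSpace Ω} (F : Filtration ℝ m0) (μ : Measure Ω)
    (T : ℝ) (θ : ℕ → Ω → ℝ) (ρ : (Ω → ℝ) → (Ω → ℝ) → (Ω → ℝ) → Ω → ℝ)
    (ξ V : (Ω → ℝ) → Ω → ℝ) : Prop :=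
  ∀ ν, InBermudan F μ T θ ν →
    MeasurableAtTime F ν (V ν) ∧
    IsEssSupFam μ
      {g | ∃ τ, InBermudan F μ T θ τ ∧ ν ≤ᵐ[μ] τ ∧ g = ρ ν τ (ξ τ)} (V ν)

/-- Property (ii): admissibility of the operators `ρ`. -/
def RhoAdmissible {m0 : MeasurableSpace Ω} (F : Filtration ℝ m0) (μ : Measure Ω)
    (T : ℝ) (θ : ℕ → Ω → ℝ) (p : ℝ≥0∞)
    (ρ : (Ω → ℝ) → (Ω → ℝ) → (Ω → ℝ) → Ω → ℝ) : Prop :=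
  ∀ S S' τ η, InBermudan F μ T θ S → InBermudan F μ T θ S' → InBermudan F μ T θ τ →
    MeasurableAtTime F τ η → MemLp η p μ →
    ∀ᵐ ω ∂μ, S ω = S' ω → ρ S τ η ω = ρ S' τ η ω

/-- Property (iii): knowledge preservation: `ρ_{τ,S}[η] = η` for `F_S`-measurable `η`,
`τ ∈ Θ_S`. -/
def RhoKnowledge {m0 : MeasurableSpace Ω} (F : Filtration ℝ m0) (μ : Measure Ω)
    (T : ℝ) (θ : ℕ → Ω → ℝ) (p : ℝ≥0∞)
    (ρ : (Ω → ℝ) → (Ω → ℝ) → (Ω → ℝ) → Ω → ℝ) : Prop :=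
  ∀ S τ η, InBermudan F μ T θ S → InBermudan F μ T θ τ → S ≤ᵐ[μ] τ →
    MeasurableAtTime F S η → MemLp η p μ → ρ τ S η =ᵐ[μ] η

/-- Property (iv): monotonicity of `ρ`. -/
def RhoMonotone {m0 : MeasurableSpace Ω} (F : Filtration ℝ m0) (μ : Measure Ω)
    (T : ℝ) (θ : ℕ → Ω → ℝ) (p : ℝ≥0∞)
    (ρ : (Ω → ℝ) → (Ω → ℝ) → (Ω → ℝ) → Ω → ℝ) : Prop :=
  ∀ S τ η₁ η₂, InBermudan F μ T θ S → InBermudan F μ T θ τ →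
    MeasurableAtTime F τ η₁ → MemLp η₁ p μ →
    MeasurableAtTime F τ η₂ → MemLp η₂ p μ →
    η₁ ≤ᵐ[μ] η₂ → ρ S τ η₁ ≤ᵐ[μ] ρ S τ η₂

/-- Strict monotonicity of `ρ`. -/
def RhoStrictMonotone {m0 : MeasurableSpace Ω} (F : Filtration ℝ m0) (μ : Measure Ω)
    (T : ℝ) (θ : ℕ → Ω → ℝ) (p : ℝ≥0∞)
    (ρ : (Ω → ℝ) → (Ω → ℝ) → (Ω → ℝ) → Ω → ℝ) : Prop :=
  RhoMonotone F μ T θ p ρ ∧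
  ∀ S τ η₁ η₂, InBermudan F μ T θ S → InBermudan F μ T θ τ →
    MeasurableAtTime F τ η₁ → MemLp η₁ p μ →
    MeasurableAtTime F τ η₂ → MemLp η₂ p μ →
    η₁ ≤ᵐ[μ] η₂ → ρ S τ η₁ =ᵐ[μ] ρ S τ η₂ → η₁ =ᵐ[μ] η₂

/-- Property (v): consistency of `ρ`. -/
def RhoConsistent {m0 : MeasurableSpace Ω} (F : Filtration ℝ m0) (μ : Measure Ω)
    (T : ℝ) (θ : ℕ → Ω → ℝ) (p : ℝ≥0∞)
    (ρ : (Ω → ℝ) → (Ω → ℝ) → (Ω → ℝ) → Ω → ℝ) : Prop :=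
  ∀ S σ τ η, InBermudan F μ T θ S → InBermudan F μ T θ σ → InBermudan F μ T θ τ →
    S ≤ᵐ[μ] σ → σ ≤ᵐ[μ] τ →
    MeasurableAtTime F τ η → MemLp η p μ →
    ρ S σ (ρ σ τ η) =ᵐ[μ] ρ S τ η

/-- Property (vi): "generalized zero-one law" of `ρ` along the family `ξ`. -/
def RhoZeroOneFor {m0 : MeasurableSpace Ω} (F : Filtration ℝ m0) (μ : Measure Ω)
    (T : ℝ) (θ : ℕ → Ω → ℝ) (ρ : (Ω → ℝ) → (Ω → ℝ) → (Ω → ℝ) → Ω → ℝ)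
    (ξ : (Ω → ℝ) → Ω → ℝ) : Prop :=
  ∀ S τ τ' A, InBermudan F μ T θ S → InBermudan F μ T θ τ → InBermudan F μ T θ τ' →
    S ≤ᵐ[μ] τ → S ≤ᵐ[μ] τ' → MeasAtTime F S A →
    (∀ᵐ ω ∂μ, ω ∈ A → τ ω = τ' ω) →
    ∀ᵐ ω ∂μ, ω ∈ A → ρ S τ (ξ τ) ω = ρ S τ' (ξ τ') ω

/-- Property (vii): monotone Fatou property of `ρ` with respect to the terminal condition. -/
def RhoFatou {m0 : MeasurableSpace Ω} (F : Filtration ℝ m0) (μ : Measure Ω)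
    (T : ℝ) (θ : ℕ → Ω → ℝ) (p : ℝ≥0∞)
    (ρ : (Ω → ℝ) → (Ω → ℝ) → (Ω → ℝ) → Ω → ℝ) : Prop :=
  ∀ S τ, InBermudan F μ T θ S → InBermudan F μ T θ τ → S ≤ᵐ[μ] τ →
    ∀ (η : ℕ → Ω → ℝ) (ηlim : Ω → ℝ),
      (∀ n, MeasurableAtTime F τ (η n) ∧ MemLp (η n) p μ) →
      (∀ n, η n ≤ᵐ[μ] η (n + 1)) →
      MemLp ηlim p μ →
      (∀ᵐ ω ∂μ, Tendsto (fun n => η n ω) atTop (nhds (ηlim ω))) →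
      ∀ᵐ ω ∂μ, ρ S τ ηlim ω ≤ Filter.liminf (fun n => ρ S τ (η n) ω) atTop

/-- Property (i): `ρ_{S,τ}` maps `L^p(F_τ)` to `L^p(F_S)`. -/
def RhoLp {m0 : MeasurableSpace Ω} (F : Filtration ℝ m0) (μ : Measure Ω)
    (T : ℝ) (θ : ℕ → Ω → ℝ) (p : ℝ≥0∞)
    (ρ : (Ω → ℝ) → (Ω → ℝ) → (Ω → ℝ) → Ω → ℝ) : Prop :=
  ∀ S τ η, InBermudan F μ T θ S → InBermudan F μ T θ τ →
    MeasurableAtTime F τ η → MemLp η p μ →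
    MeasurableAtTime F S (ρ S τ η) ∧ MemLp (ρ S τ η) p μ

/-- `(Θ,ρ)`-supermartingale family. -/
def SupermartFam {m0 : MeasurableSpace Ω} (F : Filtration ℝ m0) (μ : Measure Ω)
    (T : ℝ) (θ : ℕ → Ω → ℝ) (p : ℝ≥0∞)
    (ρ : (Ω → ℝ) → (Ω → ℝ) → (Ω → ℝ) → Ω → ℝ)
    (φ : (Ω → ℝ) → Ω → ℝ) : Prop :=
  AdmissibleFam F μ T θ φ ∧ PIntFam F μ T θ p φ ∧
  ∀ σ τ, InBermudan F μ T θ σ → InBermudan F μ T θ τ → σ ≤ᵐ[μ] τ →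
    ρ σ τ (φ τ) ≤ᵐ[μ] φ σ

/-- `(Θ,ρ)`-martingale family. -/
def MartFam {m0 : MeasurableSpace Ω} (F : Filtration ℝ m0) (μ : Measure Ω)
    (T : ℝ) (θ : ℕ → Ω → ℝ) (p : ℝ≥0∞)
    (ρ : (Ω → ℝ) → (Ω → ℝ) → (Ω → ℝ) → Ω → ℝ)
    (φ : (Ω → ℝ) → Ω → ℝ) : Prop :=
  AdmissibleFam F μ T θ φ ∧ PIntFam F μ T θ p φ ∧
  ∀ σ τ, InBermudan F μ T θ σ → InBermudan F μ T θ τ → σ ≤ᵐ[μ] τ →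
    ρ σ τ (φ τ) =ᵐ[μ] φ σ

/-- Bermudan stopping strategies in partition form. -/
def InBermudanPart {m0 : MeasurableSpace Ω} (F : Filtration ℝ m0)
    (T : ℝ) (θ : ℕ → Ω → ℝ) (τ : Ω → ℝ) : Prop :=
  IsStoppingTime F (fun ω => (τ ω : WithTop ℝ)) ∧ ∃ (A : ℕ → Set Ω) (Abar : Set Ω),
    Pairwise (Function.onFun Disjoint A) ∧ (∀ k, Disjoint (A k) Abar) ∧
    ((⋃ k, A k) ∪ Abar = Set.univ) ∧
    (∀ k, MeasAtTime F (θ k) (A k)) ∧ MeasurableSet[F T] Abar ∧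
    (∀ k, ∀ ω ∈ A k, τ ω = θ k ω) ∧ (∀ ω ∈ Abar, τ ω = T)


open Topology

/-!
For a non-decreasing sequence of stopping times `{lim τₙ ≤ t} = ⋂ₙ {τₙ ≤ t}`; for a
non-increasing one `{lim τₙ < t} = ⋃ₙ {τₙ < t}`, which suffices because the filtration is
right-continuous. Pointwise, a limit of values in `{T} ∪ {θₖ(ω) : k ∈ ℕ}` stays in this set,
which is compact since `θₖ(ω) → T`.
-/

namespace MeasureTheory

theorem Filtration.isRightContinuous_of_eq_iInf {ι : Type*} [LinearOrder ι] [DenselyOrdered ι]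
    [NoMaxOrder ι] {m : MeasurableSpace Ω} {f : Filtration ι m}
    (hf : ∀ i, f i = ⨅ (j : ι) (_ : i < j), f j) : f.IsRightContinuous :=
  ⟨fun i => (f.rightCont_eq i).trans_le (hf i).ge⟩

variable {ι : Type*} {m : MeasurableSpace Ω} {τ : ℕ → Ω → ι} {σ : Ω → ι}

theorem isStoppingTime_of_monotone_of_tendsto [LinearOrder ι] [TopologicalSpace ι]
    [OrderClosedTopology ι] {f : Filtration ι m}
    (hτ : ∀ n, IsStoppingTime f fun ω => (τ n ω : WithTop ι))
    (hmono : ∀ ω, Monotone fun n => τ n ω) (hlim : ∀ ω, Tendsto (τ · ω) atTop (𝓝 (σ ω))) :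
    IsStoppingTime f fun ω => (σ ω : WithTop ι) := by
  intro t
  have hset : {ω | (σ ω : WithTop ι) ≤ t} = ⋂ n, {ω | (τ n ω : WithTop ι) ≤ t} := by
    ext ω
    simp only [WithTop.coe_le_coe, mem_iInter, mem_ofPred_eq]
    exact ⟨fun h n => ((hmono ω).ge_of_tendsto (hlim ω) n).trans h,
      fun h => le_of_tendsto' (hlim ω) h⟩
  rw [hset]
  exact .iInter fun n => hτ n t

theorem isStoppingTime_of_antitone_of_tendsto [ConditionallyCompleteLinearOrder ι]
    [TopologicalSpace ι] [OrderTopology ι] [FirstCountableTopology ι] [DenselyOrdered ι]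
    [NoMaxOrder ι] {f : Filtration ι m} [f.IsRightContinuous]
    (hτ : ∀ n, IsStoppingTime f fun ω => (τ n ω : WithTop ι))
    (hanti : ∀ ω, Antitone fun n => τ n ω) (hlim : ∀ ω, Tendsto (τ · ω) atTop (𝓝 (σ ω))) :
    IsStoppingTime f fun ω => (σ ω : WithTop ι) := by
  refine isStoppingTime_of_measurableSet_lt_of_isRightContinuous fun t => ?_
  have hset : {ω | (σ ω : WithTop ι) < t} = ⋃ n, {ω | (τ n ω : WithTop ι) < t} := by
    ext ω
    simp only [WithTop.coe_lt_coe, mem_iUnion, mem_ofPred_eq]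
    exact ⟨fun h => ((hlim ω).eventually (gt_mem_nhds h)).exists,
      fun ⟨n, hn⟩ => ((hanti ω).le_of_tendsto (hlim ω) n).trans_lt hn⟩
  rw [hset]
  exact .iUnion fun n => (hτ n).measurableSet_lt t

end MeasureTheory

theorem mem_insert_range_of_tendsto {X : Type*} [TopologicalSpace X] [T2Space X]
    {u v : ℕ → X} {a b : X} (hu : Tendsto u atTop (𝓝 a))
    (hv : ∀ n, v n ∈ insert a (range u)) (hvb : Tendsto v atTop (𝓝 b)) :
    b ∈ insert a (range u) :=
  hu.isCompact_insert_range.isClosed.mem_of_tendsto hvb (.of_forall hv)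

theorem ae_eq_or_exists_eq_of_tendsto {m : MeasurableSpace Ω} {μ : Measure Ω} {T : ℝ}
    {θ τ : ℕ → Ω → ℝ} {σ : Ω → ℝ}
    (hθ : ∀ᵐ ω ∂μ, Tendsto (θ · ω) atTop (𝓝 T))
    (hτ : ∀ n, ∀ᵐ ω ∂μ, τ n ω = T ∨ ∃ k, τ n ω = θ k ω)
    (hlim : ∀ᵐ ω ∂μ, Tendsto (τ · ω) atTop (𝓝 (σ ω))) :
    ∀ᵐ ω ∂μ, σ ω = T ∨ ∃ k, σ ω = θ k ω := by
  have hmem {x : ℝ} {ω : Ω} : x ∈ insert T (range (θ · ω)) ↔ x = T ∨ ∃ k, x = θ k ω := by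
    simp only [mem_insert_iff, mem_range, eq_comm]
  filter_upwards [ae_all_iff.mpr hτ, hθ, hlim] with ω hτω hθω hσω
  exact hmem.mp (mem_insert_range_of_tendsto hθω (fun n => hmem.mpr (hτω n)) hσω)

theorem bermudan_closed_under_monotone_limits_general
    {m0 : MeasurableSpace Ω} (F : Filtration ℝ m0) (μ : Measure Ω)
    (T : ℝ) (θ : ℕ → Ω → ℝ)
    (hθlim : ∀ᵐ ω ∂μ, Tendsto (fun k => θ k ω) atTop (nhds T))
    (hFrc : ∀ t : ℝ, (F t : MeasurableSpace Ω) = ⨅ (s : ℝ) (_ : t < s), F s)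
    (τs : ℕ → Ω → ℝ) (hτs : ∀ n, InBermudan F μ T θ (τs n))
    (hmono : (∀ ω, Monotone fun n => τs n ω) ∨ (∀ ω, Antitone fun n => τs n ω))
    (τlim : Ω → ℝ)
    (hlim : ∀ ω, Tendsto (fun n => τs n ω) atTop (nhds (τlim ω))) :
    InBermudan F μ T θ τlim := by
  have : F.IsRightContinuous := Filtration.isRightContinuous_of_eq_iInf hFrc
  refine ⟨?_, ae_eq_or_exists_eq_of_tendsto hθlim (fun n => (hτs n).2) (ae_of_all _ hlim)⟩
  rcases hmono with hmono | hanti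
  · exact isStoppingTime_of_monotone_of_tendsto (fun n => (hτs n).1) hmono hlim
  · exact isStoppingTime_of_antitone_of_tendsto (fun n => (hτs n).1) hanti hlim

theorem bermudan_closed_under_monotone_limits
    {m0 : MeasurableSpace Ω} (F : Filtration ℝ m0) (μ : Measure Ω)
    (T : ℝ) (hT : 0 < T) (θ : ℕ → Ω → ℝ)
    (hθstop : ∀ k, IsStoppingTime F (fun ω => (θ k ω : WithTop ℝ)))
    (hθmono : ∀ k ω, θ k ω ≤ θ (k + 1) ω)
    (hθ0 : ∀ ω, θ 0 ω = 0)
    (hθT : ∀ k, ∀ᵐ ω ∂μ, θ k ω ≤ T)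
    (hθlim : ∀ᵐ ω ∂μ, Tendsto (fun k => θ k ω) atTop (nhds T))
    (hFrc : ∀ t : ℝ, (F t : MeasurableSpace Ω) = ⨅ (s : ℝ) (_ : t < s), F s)
    (τs : ℕ → Ω → ℝ) (hτs : ∀ n, InBermudan F μ T θ (τs n))
    (hmono : (∀ ω, Monotone fun n => τs n ω) ∨ (∀ ω, Antitone fun n => τs n ω))
    (τlim : Ω → ℝ)
    (hlim : ∀ ω, Tendsto (fun n => τs n ω) atTop (nhds (τlim ω))) :
    InBermudan F μ T θ τlim :=
  bermudan_closed_under_monotone_limits_general F μ T θ hθlim hFrc τs hτs hmono τlim hlim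
end

section
/- Every admissible family (φ(τ), τ ∈ Θ) is right-continuous along Bermudan stopping times: for all τ ∈ Θ and every non-increasing sequence (τ_n) ∈ Θ^ℕ with τ_n ↓ τ a.s., one has lim_{n→∞} φ(τ_n) = φ(τ) a.s. -/
open MeasureTheory Filter Set
open scoped ENNReal

variable {Ω : Type*}

/-!
Almost surely, all `τₙ(ω)` lie in the value set `{T} ∪ {θₖ(ω)}`. Since `k ↦ θₖ(ω)` is
non-decreasing, this set has no accumulation point from the right, so `τₙ(ω) ↓ τ(ω)` forces
`τₙ(ω) = τ(ω)` for all large `n`, and admissibility then gives `φ(τₙ) = φ(τ)` eventually.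
-/

open Topology

section

variable {α : Type*} [TopologicalSpace α] [LinearOrder α] [OrderTopology α]

theorem Monotone.eventually_notMem_range_nhdsGT {a : ℕ → α} (ha : Monotone a) (t : α) :
    ∀ᶠ y in 𝓝[>] t, y ∉ range a := by
  by_cases h : ∃ j, t < a j
  · classical
    filter_upwards [Ioo_mem_nhdsGT (Nat.find_spec h)] with y ⟨hty, hy⟩
    rintro ⟨j, rfl⟩
    exact hy.not_ge (ha (Nat.find_min' h hty))
  · push Not at h
    filter_upwards [self_mem_nhdsWithin] with y hy
    rintro ⟨j, rfl⟩
    exact (h j).not_gt hy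

theorem Monotone.eventually_notMem_insert_range_nhdsGT {a : ℕ → α} (ha : Monotone a)
    (T t : α) : ∀ᶠ y in 𝓝[>] t, y ∉ insert T (range a) := by
  have hne : ∀ᶠ y in 𝓝[>] t, y ≠ T := by
    rcases eq_or_ne t T with rfl | htT
    · exact eventually_mem_nhdsWithin.mono fun y hy => ne_of_gt hy
    · exact eventually_ne_nhdsWithin htT
  filter_upwards [hne, ha.eventually_notMem_range_nhdsGT t] with y hyT hya
  exact not_or.2 ⟨hyT, hya⟩

end

theorem eventually_eq_of_tendsto_of_eventually_notMem_nhdsGT {α β : Type*}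
    [TopologicalSpace α] [LinearOrder α] {l : Filter β} {s : Set α} {t : α} {x : β → α}
    (hs : ∀ᶠ y in 𝓝[>] t, y ∉ s) (hx : Tendsto x l (𝓝 t)) (hmem : ∀ n, x n ∈ s)
    (hge : ∀ n, t ≤ x n) : ∀ᶠ n in l, x n = t := by
  obtain ⟨u, hu, hus⟩ := mem_nhdsWithin_iff_exists_mem_nhds_inter.1 hs
  filter_upwards [hx hu] with n hn
  by_contra hne
  exact hus ⟨hn, lt_of_le_of_ne (hge n) (Ne.symm hne)⟩ (hmem n)

theorem admissible_family_right_continuous_general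
    {m0 : MeasurableSpace Ω} (F : Filtration ℝ m0) (μ : Measure Ω)
    (T : ℝ) (θ : ℕ → Ω → ℝ)
    (hθmono : ∀ k ω, θ k ω ≤ θ (k + 1) ω)
    (φ : (Ω → ℝ) → Ω → ℝ) (hφ : AdmissibleFam F μ T θ φ)
    (τ : Ω → ℝ) (hτ : InBermudan F μ T θ τ)
    (τs : ℕ → Ω → ℝ) (hτs : ∀ n, InBermudan F μ T θ (τs n))
    (hge : ∀ n, τ ≤ᵐ[μ] τs n)
    (hlim : ∀ᵐ ω ∂μ, Tendsto (fun n => τs n ω) atTop (nhds (τ ω))) :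
    ∀ᵐ ω ∂μ, Tendsto (fun n => φ (τs n) ω) atTop (nhds (φ τ ω)) := by
  filter_upwards [ae_all_iff.2 fun n => (hτs n).2, ae_all_iff.2 hge,
    ae_all_iff.2 fun n => hφ.2 τ (τs n) hτ (hτs n), hlim] with ω hval hle hadm hconv
  have hθω : Monotone fun k => θ k ω := monotone_nat_of_le_succ fun k => hθmono k ω
  have hmem : ∀ n, τs n ω ∈ insert T (range fun k => θ k ω) := fun n =>
    (hval n).imp id fun ⟨k, hk⟩ => ⟨k, hk.symm⟩
  have hstat : ∀ᶠ n in atTop, τs n ω = τ ω :=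
    eventually_eq_of_tendsto_of_eventually_notMem_nhdsGT
      (hθω.eventually_notMem_insert_range_nhdsGT T (τ ω)) hconv hmem hle
  exact tendsto_const_nhds.congr' (hstat.mono fun n hn => hadm n hn.symm)

theorem admissible_family_right_continuous
    {m0 : MeasurableSpace Ω} (F : Filtration ℝ m0) (μ : Measure Ω)
    (T : ℝ) (hT : 0 < T) (θ : ℕ → Ω → ℝ)
    (hθstop : ∀ k, IsStoppingTime F (fun ω => (θ k ω : WithTop ℝ)))
    (hθmono : ∀ k ω, θ k ω ≤ θ (k + 1) ω)
    (hθ0 : ∀ ω, θ 0 ω = 0)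
    (hθT : ∀ k, ∀ᵐ ω ∂μ, θ k ω ≤ T)
    (hθlim : ∀ᵐ ω ∂μ, Tendsto (fun k => θ k ω) atTop (nhds T))
    (φ : (Ω → ℝ) → Ω → ℝ) (hφ : AdmissibleFam F μ T θ φ)
    (τ : Ω → ℝ) (hτ : InBermudan F μ T θ τ)
    (τs : ℕ → Ω → ℝ) (hτs : ∀ n, InBermudan F μ T θ (τs n))
    (hdecr : ∀ ω, Antitone fun n => τs n ω)
    (hge : ∀ n, τ ≤ᵐ[μ] τs n)
    (hlim : ∀ᵐ ω ∂μ, Tendsto (fun n => τs n ω) atTop (nhds (τ ω))) :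
    ∀ᵐ ω ∂μ, Tendsto (fun n => φ (τs n) ω) atTop (nhds (φ τ ω)) :=
  admissible_family_right_continuous_general F μ T θ hθmono φ hφ τ hτ τs hτs hge hlim
end

section
/- Under the assumptions of admissibility (ρ_{S,τ}[η] = ρ_{S',τ}[η] a.s. on {S = S'}) and the generalized zero-one law (1_A·ρ_{S,τ}[ξ(τ)] = 1_A·ρ_{S,τ'}[ξ(τ')] for all A ∈ F_S and τ, τ' ∈ Θ_S with τ = τ' on A) on the non-linear operators ρ, the value family V = (V(ν), ν ∈ Θ), where V(ν) := ess sup_{τ∈Θ_ν} ρ_{ν,τ}[ξ(τ)], is admissible: V(ν) is F_ν-measurable for each ν ∈ Θ, and V(ν) = V(ν') a.s. on {ν = ν'} for all ν, ν' ∈ Θ. -/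
open MeasureTheory Filter Set
open scoped ENNReal

variable {Ω : Type*}

/-! The set `{ν = ν'}` lies in `F_ν`. Given `τ ≥ ν`, the strategy `σ = τ ∨ ν'` agrees with `τ` on
`{ν = ν'}`, so by the zero-one law and the admissibility of `ρ`, on that set
`ρ_{ν,τ}[ξ(τ)] = ρ_{ν,σ}[ξ(σ)] = ρ_{ν',σ}[ξ(σ)] ≤ V(ν')`. Taking the essential supremum over `τ`
gives `V(ν) ≤ V(ν')` on `{ν = ν'}`, and symmetry gives equality. -/

lemma IsEssSupFam.ae_le_on {m0 : MeasurableSpace Ω} {μ : Measure Ω} {s : Set (Ω → ℝ)}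
    {v : Ω → ℝ} (hv : IsEssSupFam μ s v) {A : Set Ω} {g : Ω → ℝ}
    (h : ∀ f ∈ s, ∀ᵐ ω ∂μ, ω ∈ A → f ω ≤ g ω) :
    ∀ᵐ ω ∂μ, ω ∈ A → v ω ≤ g ω := by
  classical
  have hw : ∀ f ∈ s, f ≤ᵐ[μ] A.piecewise g v := fun f hf => by
    filter_upwards [h f hf, hv.1 f hf] with ω hA hv
    by_cases hω : ω ∈ A
    · simpa only [Set.piecewise_eq_of_mem _ _ _ hω] using hA hω
    · simpa only [Set.piecewise_eq_of_notMem _ _ _ hω] using hv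
  filter_upwards [hv.2 _ hw] with ω hle hω
  simpa only [Set.piecewise_eq_of_mem _ _ _ hω] using hle

section Bermudan

variable {m0 : MeasurableSpace Ω} {F : Filtration ℝ m0} {μ : Measure Ω} {T : ℝ}
  {θ : ℕ → Ω → ℝ}

lemma measAtTime_setOf_eq {ν ν' : Ω → ℝ} (hν : IsStoppingTime F (fun ω => (ν ω : WithTop ℝ)))
    (hν' : IsStoppingTime F (fun ω => (ν' ω : WithTop ℝ))) :
    MeasAtTime F ν {ω | ν ω = ν' ω} := fun t => by
  simpa only [WithTop.coe_le_coe, WithTop.coe_eq_coe] using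
    (hν.measurableSet_eq_stopping_time hν').2 t

lemma InBermudan.max {τ σ : Ω → ℝ} (hτ : InBermudan F μ T θ τ) (hσ : InBermudan F μ T θ σ) :
    InBermudan F μ T θ (fun ω => max (τ ω) (σ ω)) := by
  refine ⟨by simpa only [WithTop.coe_max] using hτ.1.max hσ.1, ?_⟩
  filter_upwards [hτ.2, hσ.2] with ω hτω hσω
  rcases max_choice (τ ω) (σ ω) with h | h <;> rw [h] <;> assumption

lemma rho_le_value_on_eq {p : ℝ≥0∞} {ρ : (Ω → ℝ) → (Ω → ℝ) → (Ω → ℝ) → Ω → ℝ}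
    {ξ V : (Ω → ℝ) → Ω → ℝ}
    (hξ : ∀ τ, InBermudan F μ T θ τ → MeasurableAtTime F τ (ξ τ)) (hξp : PIntFam F μ T θ p ξ)
    (hρadm : RhoAdmissible F μ T θ p ρ) (hρ01 : RhoZeroOneFor F μ T θ ρ ξ)
    (hV : IsValueFam F μ T θ ρ ξ V) {ν ν' τ : Ω → ℝ} (hν : InBermudan F μ T θ ν)
    (hν' : InBermudan F μ T θ ν') (hτ : InBermudan F μ T θ τ) (hντ : ν ≤ᵐ[μ] τ) :
    ∀ᵐ ω ∂μ, ν ω = ν' ω → ρ ν τ (ξ τ) ω ≤ V ν' ω := by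
  set σ : Ω → ℝ := fun ω => max (τ ω) (ν' ω)
  have hσ : InBermudan F μ T θ σ := hτ.max hν'
  have hνσ : ν ≤ᵐ[μ] σ := by
    filter_upwards [hντ] with ω h using h.trans (le_max_left _ _)
  have hτσ : ∀ᵐ ω ∂μ, ω ∈ {ω | ν ω = ν' ω} → τ ω = σ ω := by
    filter_upwards [hντ] with ω h hω
    exact (max_eq_left (hω ▸ h)).symm
  have hzero_one := hρ01 ν τ σ _ hν hτ hσ hντ hνσ (measAtTime_setOf_eq hν.1 hν'.1) hτσ
  have hswitch := hρadm ν ν' σ (ξ σ) hν hν' hσ (hξ σ hσ) (hξp σ hσ)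
  have hbound : ρ ν' σ (ξ σ) ≤ᵐ[μ] V ν' :=
    (hV ν' hν').2.1 _ ⟨σ, hσ, .of_forall fun _ => le_max_right _ _, rfl⟩
  filter_upwards [hzero_one, hswitch, hbound] with ω h₁ h₂ h₃ hω
  calc ρ ν τ (ξ τ) ω = ρ ν σ (ξ σ) ω := h₁ hω
    _ = ρ ν' σ (ξ σ) ω := h₂ hω
    _ ≤ V ν' ω := h₃

end Bermudan

theorem value_family_admissible_general
    {m0 : MeasurableSpace Ω} (F : Filtration ℝ m0) (μ : Measure Ω)
    (T : ℝ) (θ : ℕ → Ω → ℝ)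
    (p : ℝ≥0∞) (ρ : (Ω → ℝ) → (Ω → ℝ) → (Ω → ℝ) → Ω → ℝ)
    (ξ : (Ω → ℝ) → Ω → ℝ) (hξ : AdmissibleFam F μ T θ ξ) (hξp : PIntFam F μ T θ p ξ)
    (hρadm : RhoAdmissible F μ T θ p ρ)
    (hρ01 : RhoZeroOneFor F μ T θ ρ ξ)
    (V : (Ω → ℝ) → Ω → ℝ) (hV : IsValueFam F μ T θ ρ ξ V) :
    AdmissibleFam F μ T θ V := by
  have value_le : ∀ ν ν', InBermudan F μ T θ ν → InBermudan F μ T θ ν' →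
      ∀ᵐ ω ∂μ, ν ω = ν' ω → V ν ω ≤ V ν' ω := by
    intro ν ν' hν hν'
    refine (hV ν hν).2.ae_le_on fun f ⟨τ, hτ, hντ, hf⟩ => ?_
    exact hf ▸ rho_le_value_on_eq hξ.1 hξp hρadm hρ01 hV hν hν' hτ hντ
  refine ⟨fun ν hν => (hV ν hν).1, fun ν ν' hν hν' => ?_⟩
  filter_upwards [value_le ν ν' hν hν', value_le ν' ν hν' hν] with ω h₁ h₂ hω
  exact le_antisymm (h₁ hω) (h₂ hω.symm)

theorem value_family_admissible
    {m0 : MeasurableSpace Ω} (F : Filtration ℝ m0) (μ : Measure Ω)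
    (T : ℝ) (hT : 0 < T) (θ : ℕ → Ω → ℝ)
    (hθstop : ∀ k, IsStoppingTime F (fun ω => (θ k ω : WithTop ℝ)))
    (hθmono : ∀ k ω, θ k ω ≤ θ (k + 1) ω)
    (hθ0 : ∀ ω, θ 0 ω = 0)
    (hθT : ∀ k, ∀ᵐ ω ∂μ, θ k ω ≤ T)
    (hθlim : ∀ᵐ ω ∂μ, Tendsto (fun k => θ k ω) atTop (nhds T))
    (p : ℝ≥0∞) (hp : 1 ≤ p) (ρ : (Ω → ℝ) → (Ω → ℝ) → (Ω → ℝ) → Ω → ℝ)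
    (ξ : (Ω → ℝ) → Ω → ℝ) (hξ : AdmissibleFam F μ T θ ξ) (hξp : PIntFam F μ T θ p ξ)
    (hρadm : RhoAdmissible F μ T θ p ρ)
    (hρ01 : RhoZeroOneFor F μ T θ ρ ξ)
    (V : (Ω → ℝ) → Ω → ℝ) (hV : IsValueFam F μ T θ ρ ξ V) :
    AdmissibleFam F μ T θ V :=
  value_family_admissible_general F μ T θ p ρ ξ hξ hξp hρadm hρ01 V hV
end

section
/- If ρ satisfies admissibility, knowledge preservation, generalized zero-one law, monotonicity, and there exists a p-integrable (Θ,ρ)-martingale family M with ξ(τ) ≤ M(τ) a.s. for all τ ∈ Θ, then ξ(S) ≤ V(S) ≤ M(S) a.s. for all S ∈ Θ; in particular V(S) ∈ L^p for all S ∈ Θ. -/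
open MeasureTheory Filter Set
open scoped ENNReal

variable {Ω : Type*}

/- Stopping immediately is admissible and, by knowledge preservation, has value `ξ(S)`, so
`ξ(S) ≤ V(S)`. For every `τ ∈ Θ_S`, monotonicity and the martingale property give
`ρ_{S,τ}[ξ(τ)] ≤ ρ_{S,τ}[M(τ)] = M(S)`, so `M(S)` is an upper bound of the family whose
essential supremum is `V(S)`. Being squeezed between two `L^p` variables, `V(S)` is in `L^p`. -/

theorem MeasurableAtTime.measurable {m0 : MeasurableSpace Ω} {F : Filtration ℝ m0}
    {τ : Ω → ℝ} {f : Ω → ℝ} (h : MeasurableAtTime F τ f) : Measurable f := by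
  intro B hB
  have hcover : f ⁻¹' B = ⋃ n : ℕ, f ⁻¹' B ∩ {ω | τ ω ≤ n} := by
    ext ω
    simp only [mem_iUnion, mem_inter_iff, mem_ofPred_eq, exists_and_left, iff_self_and]
    exact fun _ => exists_nat_ge (τ ω)
  rw [hcover]
  exact .iUnion fun n => F.le _ _ (h B hB n)

theorem MeasureTheory.MemLp.of_le_of_le {α : Type*} {m : MeasurableSpace α} {μ : Measure α}
    {p : ℝ≥0∞} {f g h : α → ℝ} (hg : MemLp g p μ) (hh : MemLp h p μ)
    (hf : AEStronglyMeasurable f μ) (hgf : g ≤ᵐ[μ] f) (hfh : f ≤ᵐ[μ] h) : MemLp f p μ :=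
  (hg.abs.add hh.abs).mono' hf <| by
    filter_upwards [hgf, hfh] with x hgx hhx
    exact (abs_le_max_abs_abs hgx hhx).trans (max_le_add_of_nonneg (abs_nonneg _) (abs_nonneg _))

namespace IsValueFam

variable {m0 : MeasurableSpace Ω} {F : Filtration ℝ m0} {μ : Measure Ω} {T : ℝ}
  {θ : ℕ → Ω → ℝ} {p : ℝ≥0∞} {ρ : (Ω → ℝ) → (Ω → ℝ) → (Ω → ℝ) → Ω → ℝ}
  {ξ V : (Ω → ℝ) → Ω → ℝ} {S : Ω → ℝ}

theorem payoff_ae_le (hV : IsValueFam F μ T θ ρ ξ V) (hρknow : RhoKnowledge F μ T θ p ρ)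
    (hξmeas : ∀ τ, InBermudan F μ T θ τ → MeasurableAtTime F τ (ξ τ))
    (hξp : PIntFam F μ T θ p ξ) (hS : InBermudan F μ T θ S) : ξ S ≤ᵐ[μ] V S := by
  have hSS : S ≤ᵐ[μ] S := EventuallyLE.refl _ _
  have hstop_now : ρ S S (ξ S) ≤ᵐ[μ] V S := (hV S hS).2.1 _ ⟨S, hS, hSS, rfl⟩
  exact (hρknow S S (ξ S) hS hS hSS (hξmeas S hS) (hξp S hS)).symm.trans_le hstop_now

theorem ae_le_of_martFam (hV : IsValueFam F μ T θ ρ ξ V) (hρmono : RhoMonotone F μ T θ p ρ)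
    (hξmeas : ∀ τ, InBermudan F μ T θ τ → MeasurableAtTime F τ (ξ τ))
    (hξp : PIntFam F μ T θ p ξ) {M : (Ω → ℝ) → Ω → ℝ} (hM : MartFam F μ T θ p ρ M)
    (hMdom : ∀ τ, InBermudan F μ T θ τ → ξ τ ≤ᵐ[μ] M τ) (hS : InBermudan F μ T θ S) :
    V S ≤ᵐ[μ] M S := by
  obtain ⟨⟨hMmeas, -⟩, hMp, hMmart⟩ := hM
  refine (hV S hS).2.2 (M S) ?_
  rintro _ ⟨τ, hτ, hSτ, rfl⟩
  exact (hρmono S τ _ _ hS hτ (hξmeas τ hτ) (hξp τ hτ) (hMmeas τ hτ) (hMp τ hτ)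
    (hMdom τ hτ)).trans (hMmart S τ hS hτ hSτ).le

end IsValueFam

theorem value_sandwiched_by_martingale_general
    {m0 : MeasurableSpace Ω} (F : Filtration ℝ m0) (μ : Measure Ω)
    (T : ℝ) (θ : ℕ → Ω → ℝ)
    (p : ℝ≥0∞) (ρ : (Ω → ℝ) → (Ω → ℝ) → (Ω → ℝ) → Ω → ℝ)
    (ξ : (Ω → ℝ) → Ω → ℝ) (hξ : AdmissibleFam F μ T θ ξ) (hξp : PIntFam F μ T θ p ξ)
    (hρknow : RhoKnowledge F μ T θ p ρ)
    (hρmono : RhoMonotone F μ T θ p ρ)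
    (M : (Ω → ℝ) → Ω → ℝ) (hM : MartFam F μ T θ p ρ M)
    (hMdom : ∀ τ, InBermudan F μ T θ τ → ξ τ ≤ᵐ[μ] M τ)
    (V : (Ω → ℝ) → Ω → ℝ) (hV : IsValueFam F μ T θ ρ ξ V) :
    ∀ S, InBermudan F μ T θ S →
      ξ S ≤ᵐ[μ] V S ∧ V S ≤ᵐ[μ] M S ∧ MemLp (V S) p μ := by
  intro S hS
  have hlower := hV.payoff_ae_le hρknow hξ.1 hξp hS
  have hupper := hV.ae_le_of_martFam hρmono hξ.1 hξp hM hMdom hS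
  exact ⟨hlower, hupper, (hξp S hS).of_le_of_le (hM.2.1 S hS)
    (hV S hS).1.measurable.aestronglyMeasurable hlower hupper⟩

theorem value_sandwiched_by_martingale
    {m0 : MeasurableSpace Ω} (F : Filtration ℝ m0) (μ : Measure Ω)
    (T : ℝ) (hT : 0 < T) (θ : ℕ → Ω → ℝ)
    (hθstop : ∀ k, IsStoppingTime F (fun ω => (θ k ω : WithTop ℝ)))
    (hθmono : ∀ k ω, θ k ω ≤ θ (k + 1) ω)
    (hθ0 : ∀ ω, θ 0 ω = 0)
    (hθT : ∀ k, ∀ᵐ ω ∂μ, θ k ω ≤ T)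
    (hθlim : ∀ᵐ ω ∂μ, Tendsto (fun k => θ k ω) atTop (nhds T))
    (p : ℝ≥0∞) (hp : 1 ≤ p) (ρ : (Ω → ℝ) → (Ω → ℝ) → (Ω → ℝ) → Ω → ℝ)
    (ξ : (Ω → ℝ) → Ω → ℝ) (hξ : AdmissibleFam F μ T θ ξ) (hξp : PIntFam F μ T θ p ξ)
    (hρadm : RhoAdmissible F μ T θ p ρ)
    (hρknow : RhoKnowledge F μ T θ p ρ)
    (hρmono : RhoMonotone F μ T θ p ρ)
    (hρ01 : RhoZeroOneFor F μ T θ ρ ξ)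
    (M : (Ω → ℝ) → Ω → ℝ) (hM : MartFam F μ T θ p ρ M)
    (hMdom : ∀ τ, InBermudan F μ T θ τ → ξ τ ≤ᵐ[μ] M τ)
    (V : (Ω → ℝ) → Ω → ℝ) (hV : IsValueFam F μ T θ ρ ξ V) :
    ∀ S, InBermudan F μ T θ S →
      ξ S ≤ᵐ[μ] V S ∧ V S ≤ᵐ[μ] M S ∧ MemLp (V S) p μ :=
  value_sandwiched_by_martingale_general F μ T θ p ρ ξ hξ hξp hρknow hρmono M hM hMdom V hV
end

section
/- (Optimality criterion) Let ν*_k ∈ Θ_{θ_k}. If (i) ρ_{θ_k, ν*_k}[V(ν*_k)] = ρ_{θ_k, ν*_k}[ξ(ν*_k)] a.s. and (ii) the family (V(ν ∧ ν*_k))_{ν∈Θ_{θ_k}} is a (Θ,ρ)-martingale family, then ν*_k is optimal for the problem V(θ_k) = ess sup_{τ∈Θ_{θ_k}} ρ_{θ_k,τ}[ξ(τ)], i.e., V(θ_k) = ρ_{θ_k,ν*_k}[ξ(ν*_k)] a.s. -/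
open MeasureTheory Filter Set
open scoped ENNReal

variable {Ω : Type*}

namespace InBermudan

variable {m0 : MeasurableSpace Ω} {F : Filtration ℝ m0} {μ : Measure Ω} {T : ℝ}
  {θ : ℕ → Ω → ℝ}

theorem of_grid (k : ℕ) (hθ : IsStoppingTime F (fun ω => (θ k ω : WithTop ℝ))) :
    InBermudan F μ T θ (θ k) :=
  ⟨hθ, Eventually.of_forall fun _ => Or.inr ⟨k, rfl⟩⟩

theorem min {σ τ : Ω → ℝ} (hσ : InBermudan F μ T θ σ) (hτ : InBermudan F μ T θ τ) :
    InBermudan F μ T θ (fun ω => min (σ ω) (τ ω)) := by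
  refine ⟨?_, ?_⟩
  · simpa only [WithTop.coe_min] using hσ.1.min hτ.1
  · filter_upwards [hσ.2, hτ.2] with ω hσω hτω
    rcases min_choice (σ ω) (τ ω) with h | h <;> rw [h]
    exacts [hσω, hτω]

end InBermudan

theorem AdmissibleFam.ae_eq {m0 : MeasurableSpace Ω} {F : Filtration ℝ m0} {μ : Measure Ω}
    {T : ℝ} {θ : ℕ → Ω → ℝ} {φ : (Ω → ℝ) → Ω → ℝ} (hφ : AdmissibleFam F μ T θ φ)
    {σ τ : Ω → ℝ} (hσ : InBermudan F μ T θ σ) (hτ : InBermudan F μ T θ τ) (hστ : σ =ᵐ[μ] τ) :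
    φ σ =ᵐ[μ] φ τ := by
  filter_upwards [hφ.2 σ τ hσ hτ, hστ] with ω h hω
  exact h hω

theorem optimality_criterion_general
    {m0 : MeasurableSpace Ω} (F : Filtration ℝ m0) (μ : Measure Ω)
    (T : ℝ) (θ : ℕ → Ω → ℝ)
    (hθstop : ∀ k, IsStoppingTime F (fun ω => (θ k ω : WithTop ℝ)))
    (ρ : (Ω → ℝ) → (Ω → ℝ) → (Ω → ℝ) → Ω → ℝ)
    (ξ : (Ω → ℝ) → Ω → ℝ)
    (V : (Ω → ℝ) → Ω → ℝ)
    (hVadm : AdmissibleFam F μ T θ V)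
    (k : ℕ) (νstar : Ω → ℝ)
    (hνstar : InBermudan F μ T θ νstar) (hνk : θ k ≤ᵐ[μ] νstar)
    (hi : ρ (θ k) νstar (V νstar) =ᵐ[μ] ρ (θ k) νstar (ξ νstar))
    (hii : ∀ σ τ, InBermudan F μ T θ σ → InBermudan F μ T θ τ → σ ≤ᵐ[μ] τ →
      ρ σ τ (V (fun ω => min (τ ω) (νstar ω))) =ᵐ[μ] V (fun ω => min (σ ω) (νstar ω))) :
    V (θ k) =ᵐ[μ] ρ (θ k) νstar (ξ νstar) := by
  have hθk : InBermudan F μ T θ (θ k) := .of_grid k (hθstop k)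
  have hstopped : V (θ k) =ᵐ[μ] V (fun ω => min (θ k ω) (νstar ω)) :=
    hVadm.ae_eq hθk (hθk.min hνstar) (hνk.mono fun _ h => (min_eq_left h).symm)
  have hmart : ρ (θ k) νstar (V νstar) =ᵐ[μ] V (fun ω => min (θ k ω) (νstar ω)) := by
    simpa only [min_self] using hii (θ k) νstar hθk hνstar hνk
  exact hstopped.trans (hmart.symm.trans hi)

theorem optimality_criterion
    {m0 : MeasurableSpace Ω} (F : Filtration ℝ m0) (μ : Measure Ω)
    (T : ℝ) (hT : 0 < T) (θ : ℕ → Ω → ℝ)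
    (hθstop : ∀ k, IsStoppingTime F (fun ω => (θ k ω : WithTop ℝ)))
    (hθmono : ∀ k ω, θ k ω ≤ θ (k + 1) ω)
    (hθ0 : ∀ ω, θ 0 ω = 0)
    (hθT : ∀ k, ∀ᵐ ω ∂μ, θ k ω ≤ T)
    (hθlim : ∀ᵐ ω ∂μ, Tendsto (fun k => θ k ω) atTop (nhds T))
    (p : ℝ≥0∞) (hp : 1 ≤ p) (ρ : (Ω → ℝ) → (Ω → ℝ) → (Ω → ℝ) → Ω → ℝ)
    (ξ : (Ω → ℝ) → Ω → ℝ) (hξ : AdmissibleFam F μ T θ ξ) (hξp : PIntFam F μ T θ p ξ)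
    (V : (Ω → ℝ) → Ω → ℝ) (hV : IsValueFam F μ T θ ρ ξ V)
    (hVadm : AdmissibleFam F μ T θ V) (hVp : PIntFam F μ T θ p V)
    (k : ℕ) (νstar : Ω → ℝ)
    (hνstar : InBermudan F μ T θ νstar) (hνk : θ k ≤ᵐ[μ] νstar)
    (hi : ρ (θ k) νstar (V νstar) =ᵐ[μ] ρ (θ k) νstar (ξ νstar))
    (hii : ∀ σ τ, InBermudan F μ T θ σ → InBermudan F μ T θ τ → σ ≤ᵐ[μ] τ →
      ρ σ τ (V (fun ω => min (τ ω) (νstar ω))) =ᵐ[μ] V (fun ω => min (σ ω) (νstar ω))) :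
    V (θ k) =ᵐ[μ] ρ (θ k) νstar (ξ νstar) :=
  optimality_criterion_general F μ T θ hθstop ρ ξ V hVadm k νstar hνstar hνk hi hii
end
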